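/- arXiv:1007.0721 — 2 statements merged into one kernel-verified Lean document; each statement's English description precedes it below -/
import Mathlib

section
/- With the notation of the previous statement (κ ≥ 2, [n] = sin(nπ/κ)/sin(π/κ), μ(k,l) = [k+1][l+1][k+l+2]/[2], T↑, T↓ as given), for integers k ≥ 0, l ≥ 1 with k+l+3 < κ one has T↑(k,l)·T↓(k,l)/μ(k,l) = μ(k,l+1)·μ(k+1,l)·μ(k+1,l−1). -/
/-- Quantum integer `[n] = sin(nπ/κ)/sin(π/κ)`. -/
noncomputable def qint (κ : ℕ) (n : ℕ) : ℝ :=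
  Real.sin (n * Real.pi / κ) / Real.sin (Real.pi / κ)

/-- Quantum dimension `μ(k,l) = [k+1][l+1][k+l+2]/[2]`. -/
noncomputable def quantumDim (κ k l : ℕ) : ℝ :=
  qint κ (k+1) * qint κ (l+1) * qint κ (k+l+2) / qint κ 2

/-- Squared cell modulus of a pointing-up triangle. -/
noncomputable def Tup (κ k l : ℕ) : ℝ :=
  qint κ (k+1) * qint κ (k+2) * qint κ (l+1) * qint κ (l+2) *
    qint κ (k+l+2) * qint κ (k+l+3) / (qint κ 2)^2

/-- Squared cell modulus of a pointing-down triangle. -/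
noncomputable def Tdown (κ k l : ℕ) : ℝ :=
  qint κ (k+1) * qint κ (k+2) * qint κ l * qint κ (l+1) *
    qint κ (k+l+2) * qint κ (k+l+3) / (qint κ 2)^2

/-! Both `Tup κ k l * Tdown κ k l` and `μ(k,l) μ(k,l+1) μ(k+1,l) μ(k+1,l-1)` are the same monomial in the
quantum integers divided by `[2]⁴`, so the identity is purely algebraic once `μ(k,l) ≠ 0`; and for
`k + l + 2 < κ` every quantum integer `[n]` in `μ(k,l)` has `0 < nπ/κ < π`, hence is positive. -/

lemma sin_natCast_mul_pi_div_pos {n κ : ℕ} (hn : 0 < n) (hnκ : n < κ) :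
    0 < Real.sin (n * Real.pi / κ) := by
  have hκ : (0 : ℝ) < κ := by exact_mod_cast hn.trans hnκ
  apply Real.sin_pos_of_pos_of_lt_pi (by positivity)
  rw [div_lt_iff₀ hκ, mul_comm]
  exact mul_lt_mul_of_pos_left (by exact_mod_cast hnκ) Real.pi_pos

lemma qint_pos {κ n : ℕ} (hn : 0 < n) (hnκ : n < κ) : 0 < qint κ n :=
  div_pos (sin_natCast_mul_pi_div_pos hn hnκ)
    (by simpa using sin_natCast_mul_pi_div_pos one_pos (lt_of_le_of_lt hn hnκ))

lemma quantumDim_pos {κ k l : ℕ} (h : k + l + 2 < κ) : 0 < quantumDim κ k l :=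
  div_pos
    (mul_pos (mul_pos (qint_pos (by omega) (by omega)) (qint_pos (by omega) (by omega)))
      (qint_pos (by omega) (by omega)))
    (qint_pos (by omega) (by omega))

lemma Tup_mul_Tdown (κ k : ℕ) {l : ℕ} (hl : 1 ≤ l) :
    Tup κ k l * Tdown κ k l = quantumDim κ k l *
      (quantumDim κ k (l+1) * quantumDim κ (k+1) l * quantumDim κ (k+1) (l-1)) := by
  obtain ⟨m, rfl⟩ := Nat.exists_eq_add_of_le' hl
  simp only [Tup, Tdown, quantumDim, Nat.add_sub_cancel]
  ring_nf

theorem typeII_single_deg_Ak_general (κ k l : ℕ) (hl : 1 ≤ l)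
    (h : k + l + 3 < κ) :
    Tup κ k l * Tdown κ k l / quantumDim κ k l =
      quantumDim κ k (l+1) * quantumDim κ (k+1) l * quantumDim κ (k+1) (l-1) := by
  rw [Tup_mul_Tdown κ k hl, mul_div_cancel_left₀ _ (quantumDim_pos (by omega)).ne']

theorem typeII_single_deg_Ak (κ k l : ℕ) (hκ : 2 ≤ κ) (hl : 1 ≤ l)
    (h : k + l + 3 < κ) :
    Tup κ k l * Tdown κ k l / quantumDim κ k l =
      quantumDim κ k (l+1) * quantumDim κ (k+1) l * quantumDim κ (k+1) (l-1) :=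
  typeII_single_deg_Ak_general κ k l hl h
end

section
/- There exist no real numbers a, b₁, b₂, b₃, c₁, c₂, c₃ such that for each j ∈ {1,2,3}: bⱼ + cⱼ = √((2+√3)/3) and bⱼ² + √3·cⱼ² = (1+√3)/3, and moreover a + b₁ + b₂ + b₃ = √(2+√3) and a² + √3·(b₁² + b₂² + b₃²) = 2. -/
private lemma Z9_final (s u k : ℝ) (hs : s^2 = 3) (hslb : 1.7 < s) (hsub : s < 1.8)
    (hu0 : 0 ≤ u) (hu2 : u^2 = 2 - s)
    (hk : k = 3 ∨ k = 1 ∨ k = -1 ∨ k = -3)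
    (hL : 3*s + k^2*(2-s) + 4*s*k*u = 0) : False := by
  have hs0 : (0:ℝ) ≤ s := by linarith
  have hsu0 : 0 ≤ s * u := mul_nonneg hs0 hu0
  have hsu2 : (s*u)^2 = 3*(2-s) := by linear_combination u^2*hs + 3*hu2
  rcases hk with rfl | rfl | rfl | rfl
  · nlinarith [hL, hsu0, hsub]
  · nlinarith [hL, hsu0, hslb]
  · have hsuEq : s*u = (1+s)/2 := by nlinarith [hL]
    have h14 : (14:ℝ)*s = 20 := by
      linear_combination 4*hsu2 - (4*(s*u)+2*(1+s))*hsuEq - hs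
    linarith
  · have hsuEq : s*u = (3-s)/2 := by nlinarith [hL]
    have h6 : (6:ℝ)*s = 12 := by
      linear_combination 4*hsu2 - (4*(s*u)+2*(3-s))*hsuEq - hs
    linarith

theorem Z9_incoherent :
    ¬ ∃ a b₁ b₂ b₃ c₁ c₂ c₃ : ℝ,
      (b₁ + c₁ = Real.sqrt ((2 + Real.sqrt 3) / 3) ∧
        b₁^2 + Real.sqrt 3 * c₁^2 = (1 + Real.sqrt 3) / 3) ∧
      (b₂ + c₂ = Real.sqrt ((2 + Real.sqrt 3) / 3) ∧
        b₂^2 + Real.sqrt 3 * c₂^2 = (1 + Real.sqrt 3) / 3) ∧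
      (b₃ + c₃ = Real.sqrt ((2 + Real.sqrt 3) / 3) ∧
        b₃^2 + Real.sqrt 3 * c₃^2 = (1 + Real.sqrt 3) / 3) ∧
      a + b₁ + b₂ + b₃ = Real.sqrt (2 + Real.sqrt 3) ∧
      a^2 + Real.sqrt 3 * (b₁^2 + b₂^2 + b₃^2) = 2 := by
  rintro ⟨a, b₁, b₂, b₃, c₁, c₂, c₃, ⟨h1, h1'⟩, ⟨h2, h2'⟩, ⟨h3, h3'⟩, hsum, hsq⟩
  set s := Real.sqrt 3 with hsdef
  have hs : s^2 = 3 := Real.sq_sqrt (by norm_num)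
  have hs0 : (0:ℝ) ≤ s := Real.sqrt_nonneg 3
  have hslb : (1.7:ℝ) < s := by nlinarith
  have hsub : s < 1.8 := by nlinarith
  set S := Real.sqrt ((2 + s) / 3) with hSdef
  have hS2 : S^2 = (2 + s)/3 := Real.sq_sqrt (by positivity)
  have hS0 : (0:ℝ) ≤ S := Real.sqrt_nonneg _
  set u := Real.sqrt (2 - s) with hudef
  have hu2 : u^2 = 2 - s := Real.sq_sqrt (by linarith)
  have hu0 : (0:ℝ) ≤ u := Real.sqrt_nonneg _
  -- rewrite the sum equation
  have hT2 : (s*S)^2 = 2 + s := by linear_combination S^2*hs + 3*hS2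
  have hT : Real.sqrt (2 + s) = s * S := by
    rw [← hT2]; exact Real.sqrt_sq (mul_nonneg hs0 hS0)
  rw [hT] at hsum
  have h2s : ((2:ℝ) + s) ≠ 0 := by positivity
  -- quadratic equations for each b
  have hq1 : (1+s)*b₁^2 - 2*s*S*b₁ + S^2 = 0 := by
    linear_combination h1' + s*(b₁-S-c₁)*h1 + (1-s)*hS2 - (1/3)*hs
  have hq2 : (1+s)*b₂^2 - 2*s*S*b₂ + S^2 = 0 := by
    linear_combination h2' + s*(b₂-S-c₂)*h2 + (1-s)*hS2 - (1/3)*hs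
  have hq3 : (1+s)*b₃^2 - 2*s*S*b₃ + S^2 = 0 := by
    linear_combination h3' + s*(b₃-S-c₃)*h3 + (1-s)*hS2 - (1/3)*hs
  -- factor the quadratics
  have key : ∀ b : ℝ, (1+s)*b^2 - 2*s*S*b + S^2 = 0 →
      ∃ ε : ℝ, (ε = 1 ∨ ε = -1) ∧ (1+s)*b = S*(s+ε*u) := by
    intro b hq
    have hf : ((1+s)*b - S*(s+u)) * ((1+s)*b - S*(s-u)) = 0 := by
      linear_combination (1+s)*hq + S^2*hs - S^2*hu2
    rcases mul_eq_zero.mp hf with h | h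
    · exact ⟨1, Or.inl rfl, by linear_combination h⟩
    · exact ⟨-1, Or.inr rfl, by linear_combination h⟩
  obtain ⟨ε₁, hε₁, e₁⟩ := key b₁ hq1
  obtain ⟨ε₂, hε₂, e₂⟩ := key b₂ hq2
  obtain ⟨ε₃, hε₃, e₃⟩ := key b₃ hq3
  have hε1s : ε₁^2 = 1 := by rcases hε₁ with rfl | rfl <;> norm_num
  have hε2s : ε₂^2 = 1 := by rcases hε₂ with rfl | rfl <;> norm_num
  have hε3s : ε₃^2 = 1 := by rcases hε₃ with rfl | rfl <;> norm_num
  -- explicit squares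
  have hbsq : ∀ b ε : ℝ, ε^2 = 1 → (1+s)*b = S*(s+ε*u) →
      b^2 = (5 - s + 2*ε*(s*u))/6 := by
    intro b ε hεs e
    have h' : (2+s)*(b^2*6) = (2+s)*(5 - s + 2*ε*(s*u)) := by
      linear_combination 3*((1+s)*b + S*(s+ε*u))*e - 3*b^2*hs
        + 3*(s+ε*u)^2*hS2 + (2+s)*hs + (2+s)*u^2*hεs + (2+s)*hu2
    linear_combination (1/6) * mul_left_cancel₀ h2s h'
  have hb1 := hbsq b₁ ε₁ hε1s e₁
  have hb2 := hbsq b₂ ε₂ hε2s e₂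
  have hb3 := hbsq b₃ ε₃ hε3s e₃
  set k := ε₁ + ε₂ + ε₃ with hkdef
  have ha : (1+s)*a = S*(3-2*s-k*u) := by
    linear_combination (1+s)*hsum - e₁ - e₂ - e₃ + S*hs
  have ha2 : a^2 = (21 - 12*s + k^2*(2-s) - (6-4*s)*k*u)/6 := by
    have h' : (2+s)*(a^2*6) = (2+s)*(21 - 12*s + k^2*(2-s) - (6-4*s)*k*u) := by
      linear_combination 3*((1+s)*a + S*(3-2*s-k*u))*ha - 3*a^2*hs
        + 3*(3-2*s-k*u)^2*hS2 + 4*(2+s)*hs + (2+s)*k^2*hu2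
    linear_combination (1/6) * mul_left_cancel₀ h2s h'
  have hL : 3*s + k^2*(2-s) + 4*s*k*u = 0 := by
    linear_combination 6*hsq - 6*ha2 - 6*s*hb1 - 6*s*hb2 - 6*s*hb3 - (2*k*u-3)*hs
  have hk : k = 3 ∨ k = 1 ∨ k = -1 ∨ k = -3 := by
    rcases hε₁ with rfl | rfl <;> rcases hε₂ with rfl | rfl <;>
      rcases hε₃ with rfl | rfl <;> simp [hkdef] <;> norm_num
  exact Z9_final s u k hs hslb hsub hu0 hu2 hk hL
end
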